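/- In the overalgebra 𝐀 of the second type, the interval [β⋆, β̃] in Con 𝐀 equals {θ ∈ Eq(A) : β⋆ ⊆ θ ⊆ β̃} and is isomorphic as a lattice to ∏_{n=1}^{N} (Eq(𝒯_n))^{m−1}, where Eq(X) denotes the lattice of equivalence relations on the set X and m is the number of congruence classes of β. -/
import Mathlib


namespace Overalg

variable {A : Type*}

/-- `θ` is an equivalence relation on the whole type `A`, viewed as a set of pairs. -/
def IsEquivRel (θ : Set (A × A)) : Prop :=
  (∀ x : A, (x, x) ∈ θ) ∧ (∀ x y : A, (x, y) ∈ θ → (y, x) ∈ θ) ∧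
    (∀ x y z : A, (x, y) ∈ θ → (y, z) ∈ θ → (x, z) ∈ θ)

/-- `θ` is an equivalence relation on the subset `B` of `A`, viewed as a set of pairs. -/
def IsEquivOn (B : Set A) (θ : Set (A × A)) : Prop :=
  θ ⊆ B ×ˢ B ∧ (∀ x ∈ B, (x, x) ∈ θ) ∧ (∀ x y : A, (x, y) ∈ θ → (y, x) ∈ θ) ∧
    (∀ x y z : A, (x, y) ∈ θ → (y, z) ∈ θ → (x, z) ∈ θ)

/-- The clone of unary polynomials of the unary algebra `⟨A, F⟩`: the smallest set of
maps `A → A` containing `F`, the identity and all constants, closed under composition. -/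
inductive Pol1 (F : Set (A → A)) : (A → A) → Prop
  | base : ∀ f ∈ F, Pol1 F f
  | id : Pol1 F _root_.id
  | const : ∀ a : A, Pol1 F (fun _ => a)
  | comp : ∀ f g : A → A, Pol1 F f → Pol1 F g → Pol1 F (f ∘ g)

/-- A congruence of the unary algebra `⟨A, F⟩`. -/
def IsCon (F : Set (A → A)) (θ : Set (A × A)) : Prop :=
  IsEquivRel θ ∧ ∀ f ∈ F, ∀ p ∈ θ, (f p.1, f p.2) ∈ θ

end Overalg

namespace Overalg

/-- The data of an *overalgebra of the second type*, built over a finite base algebra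
`𝐁 = ⟨B 0, F⟩` and the congruence `β = Cg^𝐁((a 1, b 1), …, (a (K-1), b (K-1)))`.
The universe is `A = B 0 ∪ B 1 ∪ ⋯ ∪ B (u*K)`, a chain of copies of `B 0` glued at
tie-points as in the paper; `π j : B 0 → B j` are bijections with inverses `σ j`;
`T 1 | ⋯ | T N` is a partition of the multiples of `K` in `{0, …, u*K}`, and the maps
`e j` are the retractions described in the construction. -/
structure OvII (A : Type*) where
  K : ℕ
  u : ℕ
  N : ℕ
  B : ℕ → Set A
  F : Set (A → A)
  a : ℕ → A
  b : ℕ → A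
  π : ℕ → A → A
  σ : ℕ → A → A
  T : ℕ → Set ℕ
  e : ℕ → A → A
  β : Set (A × A)
  hfin : Finite A
  hK : 2 ≤ K
  hu : 1 ≤ u
  /-- `A = B 0 ∪ ⋯ ∪ B (u*K)` -/
  hA : ∀ x : A, ∃ j ≤ u * K, x ∈ B j
  /-- the base operations map `B 0` into itself -/
  hF : ∀ f ∈ F, Set.MapsTo f (B 0) (B 0)
  /-- the generating pairs lie in `B 0` -/
  hab : ∀ i, 1 ≤ i → i ≤ K - 1 → a i ∈ B 0 ∧ b i ∈ B 0
  /-- `π 0` is the identity -/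
  hπ0 : ∀ x : A, π 0 x = x
  /-- `π j` is a bijection of `B 0` onto `B j` -/
  hπ : ∀ j ≤ u * K, Set.BijOn (π j) (B 0) (B j)
  /-- `σ j` inverts `π j` on `B 0` -/
  hσ : ∀ j ≤ u * K, ∀ c ∈ B 0, σ j (π j c) = c
  /-- `β` is the smallest congruence of `𝐁` containing the pairs `(a i, b i)` -/
  hβ : IsLeast {γ : Set (A × A) |
      (IsEquivOn (B 0) γ ∧ ∀ f ∈ F, ∀ p ∈ γ, (f p.1, f p.2) ∈ γ) ∧
      ∀ i, 1 ≤ i → i ≤ K - 1 → (a i, b i) ∈ γ} β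
  /-- adjacent intersections at a multiple of `K`:
  `B ℓ ∩ B (ℓ+1) = {a₁^ℓ} = {a₁^{ℓ+1}}` -/
  hadj0 : ∀ j < u * K, j % K = 0 →
    B j ∩ B (j + 1) = {π j (a 1)} ∧ π j (a 1) = π (j + 1) (a 1)
  /-- adjacent intersections in the middle of a segment:
  `B (ℓ+i) ∩ B (ℓ+i+1) = {b_i^{ℓ+i}} = {a_{i+1}^{ℓ+i+1}}` for `1 ≤ i ≤ K-2` -/
  hadjm : ∀ j < u * K, 1 ≤ j % K → j % K ≤ K - 2 →
    B j ∩ B (j + 1) = {π j (b (j % K))} ∧ π j (b (j % K)) = π (j + 1) (a (j % K + 1))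
  /-- adjacent intersections at the end of a segment:
  `B (ℓ+K-1) ∩ B (ℓ+K) = {b_{K-1}^{ℓ+K-1}} = {a₁^{ℓ+K}}` -/
  hadjl : ∀ j < u * K, j % K = K - 1 →
    B j ∩ B (j + 1) = {π j (b (K - 1))} ∧ π j (b (K - 1)) = π (j + 1) (a 1)
  /-- the triple meets: `B (ℓ-1) ∩ B (ℓ+1) = {a₁^ℓ}` for `ℓ` a positive multiple
  of `K` with `ℓ < u*K` -/
  htriple : ∀ j, 0 < j → j + 1 ≤ u * K → j % K = 0 → B (j - 1) ∩ B (j + 1) = {π j (a 1)}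
  /-- all other intersections are empty -/
  hempty : ∀ i j, i ≤ u * K → j ≤ u * K → i + 2 ≤ j →
    ¬(j = i + 2 ∧ (i + 1) % K = 0) → B i ∩ B j = ∅
  /-- each block `T n` consists of multiples of `K` that are at most `u*K` -/
  hT1 : ∀ n, 1 ≤ n → n ≤ N → T n ⊆ {j : ℕ | j ≤ u * K ∧ K ∣ j}
  /-- the blocks `T 1, …, T N` partition `{0, K, 2K, …, uK}` -/
  hT2 : ∀ j ≤ u * K, K ∣ j → ∃! n, 1 ≤ n ∧ n ≤ N ∧ j ∈ T n
  /-- for `ℓ` a multiple of `K`: `e ℓ` maps `B j` onto `B ℓ` via `S_{j,ℓ}` when `j` is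
  in the same block of the partition as `ℓ` … -/
  heK1 : ∀ n, 1 ≤ n → n ≤ N → ∀ ℓ ∈ T n, ∀ j ∈ T n, ∀ c ∈ B 0, e ℓ (π j c) = π ℓ c
  /-- … and sends everything else to the tie-point `a₁^ℓ` -/
  heK2 : ∀ n, 1 ≤ n → n ≤ N → ∀ ℓ ∈ T n, ∀ x : A, (∀ j ∈ T n, x ∉ B j) →
    e ℓ x = π ℓ (a 1)
  /-- for `j = ℓ + i` with `1 ≤ i < K`: `e j` is the identity on `B j` … -/
  heM1 : ∀ j ≤ u * K, j % K ≠ 0 → ∀ x ∈ B j, e j x = x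
  /-- … maps everything to the left of `B j` to the left tie-point `a_i^j` … -/
  heM2 : ∀ j ≤ u * K, j % K ≠ 0 → ∀ j' < j, ∀ x ∈ B j', x ∉ B j →
    e j x = π j (a (j % K))
  /-- … and everything to the right of `B j` to the right tie-point `b_i^j` -/
  heM3 : ∀ j ≤ u * K, j % K ≠ 0 → ∀ j', j < j' → j' ≤ u * K → ∀ x ∈ B j', x ∉ B j →
    e j x = π j (b (j % K))

namespace OvII

variable {A : Type*} (O : OvII A)

/-- `q i j = S i j ∘ e i`; here `q i 0 = σ i ∘ e i` and `q 0 j = π j ∘ e 0`. -/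
def qi0 (i : ℕ) : A → A := fun x => O.σ i (O.e i x)

/-- `q 0 j = π j ∘ e 0`. -/
def q0j (j : ℕ) : A → A := fun x => O.π j (O.e 0 x)

/-- The operations of the overalgebra:
`F_A = {f ∘ e 0 : f ∈ F} ∪ {q i 0 : 0 ≤ i ≤ uK} ∪ {q 0 j : 1 ≤ j ≤ uK}`. -/
def FA : Set (A → A) :=
  {g | ∃ f ∈ O.F, g = f ∘ O.e 0} ∪ {g | ∃ i ≤ O.u * O.K, g = O.qi0 i} ∪
    {g | ∃ j, 1 ≤ j ∧ j ≤ O.u * O.K ∧ g = O.q0j j}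

/-- A congruence of the base algebra `𝐁 = ⟨B 0, F⟩`. -/
def ConB (θ : Set (A × A)) : Prop :=
  IsEquivOn (O.B 0) θ ∧ ∀ f ∈ O.F, ∀ p ∈ θ, (f p.1, f p.2) ∈ θ

/-- A tie-point `t j` of `B j`: `a₁^j` when `K ∣ j`, and `a_i^j` when `j = ℓ + i`,
`1 ≤ i < K`. -/
def tie (j : ℕ) : A := O.π j (O.a (if j % O.K = 0 then 1 else j % O.K))

/-- `β^j = {(π j x, π j y) : (x, y) ∈ β}`, the copy of `β` on `B j`. -/
def bj (j : ℕ) : Set (A × A) := {p | ∃ q ∈ O.β, p = (O.π j q.1, O.π j q.2)}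

/-- `t j / β^j`, the `β^j`-class of the tie-point of `B j`. -/
def tcls (j : ℕ) : Set A := {x | (O.tie j, x) ∈ O.bj j}

/-- `β⋆ = ⋃_{j=0}^{uK} β^j ∪ (⋃_{j=0}^{uK} t_j/β^j)²`. -/
def bstar : Set (A × A) :=
  {p | ∃ j ≤ O.u * O.K, p ∈ O.bj j} ∪
    {p | (∃ j ≤ O.u * O.K, p.1 ∈ O.tcls j) ∧ (∃ j ≤ O.u * O.K, p.2 ∈ O.tcls j)}

/-- The `θ`-class of `c`. -/
def cls (_O : OvII A) (θ : Set (A × A)) (c : A) : Set A := {x | (c, x) ∈ θ}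

/-- For `c ∈ B 0` with `β`-class `C_r = c/β`, this is `⋃_{ℓ ∈ T n} C_r^ℓ`. -/
def wing (n : ℕ) (c : A) : Set A := ⋃ ℓ ∈ O.T n, O.π ℓ '' O.cls O.β c

/-- `β̃ = β⋆ ∪ ⋃_{r=1}^{m-1} ⋃_{n=1}^{N} (⋃_{ℓ ∈ 𝒯_n} C_r^ℓ)²`, where the classes of
`β` other than the class of `a 1` are parametrized by their elements `c`. -/
def btilde : Set (A × A) :=
  O.bstar ∪
    {p | ∃ n, 1 ≤ n ∧ n ≤ O.N ∧ ∃ c ∈ O.B 0, (c, O.a 1) ∉ O.β ∧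
      p.1 ∈ O.wing n c ∧ p.2 ∈ O.wing n c}

end OvII

end Overalg

namespace Overalg

namespace OvII

variable {A : Type*} {O : OvII A}

section Aux

-- ## Basic facts about the base congruence β

lemma beta_sub : O.β ⊆ (O.B 0) ×ˢ (O.B 0) := O.hβ.1.1.1.1

lemma beta_refl {c : A} (hc : c ∈ O.B 0) : (c, c) ∈ O.β := O.hβ.1.1.1.2.1 c hc

lemma beta_symm {x y : A} (h : (x, y) ∈ O.β) : (y, x) ∈ O.β := O.hβ.1.1.1.2.2.1 x y h

lemma beta_trans {x y z : A} (h : (x, y) ∈ O.β) (h' : (y, z) ∈ O.β) : (x, z) ∈ O.β :=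
  O.hβ.1.1.1.2.2.2 x y z h h'

lemma beta_fst {x y : A} (h : (x, y) ∈ O.β) : x ∈ O.B 0 := (beta_sub h).1

lemma beta_snd {x y : A} (h : (x, y) ∈ O.β) : y ∈ O.B 0 := (beta_sub h).2

lemma beta_cong {f : A → A} (hf : f ∈ O.F) {p : A × A} (hp : p ∈ O.β) :
    (f p.1, f p.2) ∈ O.β := O.hβ.1.1.2 f hf p hp

lemma beta_gen {i : ℕ} (h1 : 1 ≤ i) (h2 : i ≤ O.K - 1) : (O.a i, O.b i) ∈ O.β :=
  O.hβ.1.2 i h1 h2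

lemma a_mem {i : ℕ} (h1 : 1 ≤ i) (h2 : i ≤ O.K - 1) : O.a i ∈ O.B 0 := (O.hab i h1 h2).1

lemma b_mem {i : ℕ} (h1 : 1 ≤ i) (h2 : i ≤ O.K - 1) : O.b i ∈ O.B 0 := (O.hab i h1 h2).2

lemma a1_mem : O.a 1 ∈ O.B 0 := a_mem le_rfl (by have := O.hK; omega)

lemma pi_mem {j : ℕ} {c : A} (hj : j ≤ O.u * O.K) (hc : c ∈ O.B 0) : O.π j c ∈ O.B j :=
  (O.hπ j hj).1 hc

lemma pi_inj {j : ℕ} {c d : A} (hj : j ≤ O.u * O.K) (hc : c ∈ O.B 0) (hd : d ∈ O.B 0)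
    (h : O.π j c = O.π j d) : c = d := (O.hπ j hj).2.1 hc hd h

lemma pi_surj {j : ℕ} {x : A} (hj : j ≤ O.u * O.K) (hx : x ∈ O.B j) :
    ∃ c ∈ O.B 0, O.π j c = x := (O.hπ j hj).2.2 hx

-- ## Modular arithmetic helpers

private lemma mod1 {k i : ℕ} (hk : 2 ≤ k) (h : i % k = 0) : (i + 1) % k = 1 := by
  rw [Nat.add_mod, h]
  simp [Nat.mod_eq_of_lt (show 1 < k by omega)]

private lemma mod2 {k i : ℕ} (hk : 2 ≤ k) (h : (i + 1) % k = 0) : i % k = k - 1 := by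
  obtain ⟨q, hq⟩ := Nat.dvd_of_mod_eq_zero h
  match q, hq with
  | 0, hq => omega
  | q + 1, hq =>
    rw [Nat.mul_succ] at hq
    have hi : i = (k - 1) + k * q := by omega
    rw [hi, Nat.add_mul_mod_self_left, Nat.mod_eq_of_lt (by omega)]

private lemma mod3 {k i : ℕ} (hk : 2 ≤ k) (h0 : i % k ≠ k - 1) : (i + 1) % k = i % k + 1 := by
  have h1 : i % k < k := Nat.mod_lt _ (by omega)
  rw [Nat.add_mod, Nat.mod_eq_of_lt (show 1 < k by omega), Nat.mod_eq_of_lt (by omega)]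

private lemma mod4 {k i : ℕ} (hk : 2 ≤ k) (h : i % k = k - 1) : (i + 1) % k = 0 := by
  rw [Nat.add_mod, h, Nat.mod_eq_of_lt (show 1 < k by omega)]
  have hk1 : k - 1 + 1 = k := by omega
  rw [hk1, Nat.mod_self]

-- ## Intersections of the copies

lemma mult_disj {i j : ℕ} (hi : i ≤ O.u * O.K) (hj : j ≤ O.u * O.K) (hKi : i % O.K = 0)
    (hKj : j % O.K = 0) (hne : i ≠ j) {x : A} (hxi : x ∈ O.B i) (hxj : x ∈ O.B j) : False := by
  have hK2 := O.hK
  have key : ∀ i' j' : ℕ, i' ≤ O.u * O.K → j' ≤ O.u * O.K → i' % O.K = 0 → j' % O.K = 0 →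
      i' < j' → x ∈ O.B i' → x ∈ O.B j' → False := by
    intro i' j' hi' hj' hKi' hKj' hlt hxi' hxj'
    have hd : O.K ∣ j' - i' :=
      Nat.dvd_sub (Nat.dvd_of_mod_eq_zero hKj') (Nat.dvd_of_mod_eq_zero hKi')
    have hge : O.K ≤ j' - i' := Nat.le_of_dvd (by omega) hd
    have h2 : i' + 2 ≤ j' := by omega
    have hguard : ¬(j' = i' + 2 ∧ (i' + 1) % O.K = 0) := by
      rintro ⟨hje, hmod⟩
      rw [mod1 hK2 hKi'] at hmod
      omega
    have hemp := O.hempty i' j' hi' hj' h2 hguard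
    have : x ∈ (∅ : Set A) := hemp ▸ (⟨hxi', hxj'⟩ : x ∈ O.B i' ∩ O.B j')
    exact this
  rcases hne.lt_or_gt with hlt | hlt
  · exact key i j hi hj hKi hKj hlt hxi hxj
  · exact key j i hj hi hKj hKi hlt hxj hxi

lemma mult_eq {i j : ℕ} (hi : i ≤ O.u * O.K) (hj : j ≤ O.u * O.K) (hKi : i % O.K = 0)
    (hKj : j % O.K = 0) {x : A} (hxi : x ∈ O.B i) (hxj : x ∈ O.B j) : i = j := by
  by_contra h
  exact mult_disj hi hj hKi hKj h hxi hxj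

lemma inter_pt {i j : ℕ} (hi : i ≤ O.u * O.K) (hj : j ≤ O.u * O.K) (hne : i ≠ j) {x : A}
    (hxi : x ∈ O.B i) (hxj : x ∈ O.B j) :
    (i % O.K = 0 ∧ x = O.π i (O.a 1)) ∨
      (i % O.K ≠ 0 ∧ (x = O.π i (O.a (i % O.K)) ∨ x = O.π i (O.b (i % O.K)))) := by
  have hK2 := O.hK
  rcases hne.lt_or_gt with hlt | hlt
  · -- i < j
    by_cases hj1 : j = i + 1
    · subst hj1
      have hiM : i < O.u * O.K := by omega
      by_cases h0 : i % O.K = 0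
      · have h := O.hadj0 i hiM h0
        have hx : x ∈ ({O.π i (O.a 1)} : Set A) := h.1 ▸ (⟨hxi, hxj⟩ : x ∈ O.B i ∩ O.B (i + 1))
        exact Or.inl ⟨h0, hx⟩
      · by_cases hlast : i % O.K = O.K - 1
        · have h := O.hadjl i hiM hlast
          have hx : x ∈ ({O.π i (O.b (O.K - 1))} : Set A) :=
            h.1 ▸ (⟨hxi, hxj⟩ : x ∈ O.B i ∩ O.B (i + 1))
          exact Or.inr ⟨h0, Or.inr (by rw [hlast]; exact hx)⟩
        · have hblt : i % O.K < O.K := Nat.mod_lt _ (by omega)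
          have h := O.hadjm i hiM (by omega) (by omega)
          have hx : x ∈ ({O.π i (O.b (i % O.K))} : Set A) :=
            h.1 ▸ (⟨hxi, hxj⟩ : x ∈ O.B i ∩ O.B (i + 1))
          exact Or.inr ⟨h0, Or.inr hx⟩
    · by_cases hj2 : j = i + 2 ∧ (i + 1) % O.K = 0
      · obtain ⟨hj2e, hj2m⟩ := hj2
        subst hj2e
        have ht := O.htriple (i + 1) (by omega) (by omega) hj2m
        have hx : x ∈ ({O.π (i + 1) (O.a 1)} : Set A) := by
          rw [← ht]
          exact ⟨by simpa using hxi, hxj⟩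
        have hil : i % O.K = O.K - 1 := mod2 hK2 hj2m
        have h := O.hadjl i (by omega) hil
        have hxe : x = O.π i (O.b (O.K - 1)) := by
          rw [show x = O.π (i + 1) (O.a 1) from hx, ← h.2]
        exact Or.inr ⟨by omega, Or.inr (by rw [hil]; exact hxe)⟩
      · have h2 : i + 2 ≤ j := by omega
        have hemp := O.hempty i j hi hj h2 hj2
        have : x ∈ (∅ : Set A) := hemp ▸ (⟨hxi, hxj⟩ : x ∈ O.B i ∩ O.B j)
        exact this.elim
  · -- j < i
    by_cases hi1 : i = j + 1
    · subst hi1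
      have hjM : j < O.u * O.K := by omega
      by_cases h0 : j % O.K = 0
      · have h := O.hadj0 j hjM h0
        have hx : x ∈ ({O.π j (O.a 1)} : Set A) := h.1 ▸ (⟨hxj, hxi⟩ : x ∈ O.B j ∩ O.B (j + 1))
        have hmod : (j + 1) % O.K = 1 := mod1 hK2 h0
        refine Or.inr ⟨by omega, Or.inl ?_⟩
        rw [hmod, ← h.2]
        exact hx
      · by_cases hlast : j % O.K = O.K - 1
        · have h := O.hadjl j hjM hlast
          have hx : x ∈ ({O.π j (O.b (O.K - 1))} : Set A) :=
            h.1 ▸ (⟨hxj, hxi⟩ : x ∈ O.B j ∩ O.B (j + 1))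
          have hmod : (j + 1) % O.K = 0 := mod4 hK2 hlast
          refine Or.inl ⟨hmod, ?_⟩
          rw [← h.2]
          exact hx
        · have hblt : j % O.K < O.K := Nat.mod_lt _ (by omega)
          have h := O.hadjm j hjM (by omega) (by omega)
          have hx : x ∈ ({O.π j (O.b (j % O.K))} : Set A) :=
            h.1 ▸ (⟨hxj, hxi⟩ : x ∈ O.B j ∩ O.B (j + 1))
          have hmod : (j + 1) % O.K = j % O.K + 1 := mod3 hK2 hlast
          refine Or.inr ⟨by omega, Or.inl ?_⟩
          rw [hmod, ← h.2]
          exact hx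
    · by_cases hi2 : i = j + 2 ∧ (j + 1) % O.K = 0
      · obtain ⟨hi2e, hi2m⟩ := hi2
        subst hi2e
        have ht := O.htriple (j + 1) (by omega) (by omega) hi2m
        have hx : x ∈ ({O.π (j + 1) (O.a 1)} : Set A) := by
          rw [← ht]
          exact ⟨by simpa using hxj, hxi⟩
        have h := O.hadj0 (j + 1) (by omega) hi2m
        have hmod : (j + 2) % O.K = 1 := by
          have := mod1 hK2 hi2m
          simpa using this
        refine Or.inr ⟨by omega, Or.inl ?_⟩
        rw [hmod]
        rw [show x = O.π (j + 1) (O.a 1) from hx, h.2]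
      · have h2 : j + 2 ≤ i := by omega
        have hemp := O.hempty j i hj hi h2 hi2
        have : x ∈ (∅ : Set A) := hemp ▸ (⟨hxj, hxi⟩ : x ∈ O.B j ∩ O.B i)
        exact this.elim

lemma inter_pt0 {i j : ℕ} (hi : i ≤ O.u * O.K) (hj : j ≤ O.u * O.K) (hne : i ≠ j)
    (hKi : i % O.K = 0) {x : A} (hxi : x ∈ O.B i) (hxj : x ∈ O.B j) : x = O.π i (O.a 1) := by
  rcases inter_pt hi hj hne hxi hxj with ⟨-, h⟩ | ⟨h0, -⟩
  · exact h
  · exact absurd hKi h0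

end Aux

end OvII

end Overalg
namespace Overalg

namespace OvII

variable {A : Type*} {O : OvII A}

section Aux2

-- ## β^j, tie classes and β⋆

lemma bj_intro {j : ℕ} {c d : A} (h : (c, d) ∈ O.β) : (O.π j c, O.π j d) ∈ O.bj j :=
  ⟨(c, d), h, rfl⟩

lemma bj_elim {j : ℕ} {p : A × A} (h : p ∈ O.bj j) :
    ∃ c d, c ∈ O.B 0 ∧ d ∈ O.B 0 ∧ (c, d) ∈ O.β ∧ p.1 = O.π j c ∧ p.2 = O.π j d := by
  obtain ⟨q, hq, hpe⟩ := h
  exact ⟨q.1, q.2, beta_fst hq, beta_snd hq, hq, by rw [hpe], by rw [hpe]⟩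


lemma bj_elim' {j : ℕ} {x y : A} (h : (x, y) ∈ O.bj j) :
    ∃ c d, c ∈ O.B 0 ∧ d ∈ O.B 0 ∧ (c, d) ∈ O.β ∧ x = O.π j c ∧ y = O.π j d := by
  obtain ⟨c, d, h1, h2, h3, h4, h5⟩ := bj_elim h
  exact ⟨c, d, h1, h2, h3, h4, h5⟩

lemma bj_symm {j : ℕ} {x y : A} (h : (x, y) ∈ O.bj j) : (y, x) ∈ O.bj j := by
  obtain ⟨c, d, hc, hd, hb, h1, h2⟩ := bj_elim' h
  rw [show x = O.π j c from h1, show y = O.π j d from h2]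
  exact bj_intro (beta_symm hb)

lemma tidx_mem {j : ℕ} : O.a (if j % O.K = 0 then 1 else j % O.K) ∈ O.B 0 := by
  have hK2 := O.hK
  have hlt : j % O.K < O.K := Nat.mod_lt _ (by omega)
  by_cases h : j % O.K = 0
  · rw [if_pos h]; exact a1_mem
  · rw [if_neg h]; exact a_mem (by omega) (by omega)

lemma tcls_elim {j : ℕ} {x : A} (hj : j ≤ O.u * O.K) (h : x ∈ O.tcls j) :
    ∃ c ∈ O.B 0, x = O.π j c ∧ (O.a (if j % O.K = 0 then 1 else j % O.K), c) ∈ O.β := by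
  obtain ⟨c1, c2, h1, h2, hb, he1, he2⟩ := bj_elim h
  have he1' : O.π j (O.a (if j % O.K = 0 then 1 else j % O.K)) = O.π j c1 := he1
  have hac : O.a (if j % O.K = 0 then 1 else j % O.K) = c1 := pi_inj hj tidx_mem h1 he1'
  exact ⟨c2, h2, he2, hac ▸ hb⟩

lemma tcls_intro {j : ℕ} {c : A}
    (h : (O.a (if j % O.K = 0 then 1 else j % O.K), c) ∈ O.β) : O.π j c ∈ O.tcls j :=
  bj_intro h

lemma tcls_memB {j : ℕ} {x : A} (hj : j ≤ O.u * O.K) (h : x ∈ O.tcls j) : x ∈ O.B j := by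
  obtain ⟨c, hc, rfl, -⟩ := tcls_elim hj h
  exact pi_mem hj hc

lemma bstar_bj {j : ℕ} (hj : j ≤ O.u * O.K) {p : A × A} (h : p ∈ O.bj j) : p ∈ O.bstar :=
  Or.inl ⟨j, hj, h⟩

lemma bstar_t {x y : A} {j j' : ℕ} (hj : j ≤ O.u * O.K) (hj' : j' ≤ O.u * O.K)
    (hx : x ∈ O.tcls j) (hy : y ∈ O.tcls j') : (x, y) ∈ O.bstar :=
  Or.inr ⟨⟨j, hj, hx⟩, ⟨j', hj', hy⟩⟩

lemma beta_bstar {c d : A} (h : (c, d) ∈ O.β) : (c, d) ∈ O.bstar := by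
  have h0 := bj_intro (j := 0) h
  rw [O.hπ0, O.hπ0] at h0
  exact bstar_bj (Nat.zero_le _) h0

lemma bstar_refl (x : A) : (x, x) ∈ O.bstar := by
  obtain ⟨j, hj, hx⟩ := O.hA x
  obtain ⟨c, hc, rfl⟩ := pi_surj hj hx
  exact bstar_bj hj (bj_intro (beta_refl hc))

lemma bstar_symm {x y : A} (h : (x, y) ∈ O.bstar) : (y, x) ∈ O.bstar := by
  rcases h with ⟨j, hj, hx⟩ | ⟨h1, h2⟩
  · exact bstar_bj hj (bj_symm hx)
  · exact Or.inr ⟨h2, h1⟩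

/-- If `(x,y) ∈ β^j` and `y` also lies in a different copy `B j'`, then `y` is a
tie-point of `B j` and both `x` and `y` lie in the tie class of `B j`. -/
lemma bj_touch {j j' : ℕ} (hj : j ≤ O.u * O.K) (hj' : j' ≤ O.u * O.K) (hne : j ≠ j')
    {x y : A} (hxy : (x, y) ∈ O.bj j) (hy : y ∈ O.B j') : x ∈ O.tcls j ∧ y ∈ O.tcls j := by
  have hK2 := O.hK
  obtain ⟨c, d, hc, hd, hb, hx1, hy1⟩ := bj_elim' hxy
  have hyB : y ∈ O.B j := by rw [hy1]; exact pi_mem hj hd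
  have finish : ∀ t, (O.a (if j % O.K = 0 then 1 else j % O.K), t) ∈ O.β → d = t →
      x ∈ O.tcls j ∧ y ∈ O.tcls j := by
    intro t hrel hdt
    subst hdt
    constructor
    · rw [hx1]
      exact tcls_intro (beta_trans hrel (beta_symm hb))
    · rw [hy1]
      exact tcls_intro hrel
  rcases inter_pt hj hj' hne hyB hy with ⟨h0, hpe⟩ | ⟨h0, hab⟩
  · have hdt : d = O.a 1 := pi_inj hj hd a1_mem (hy1.symm.trans hpe)
    refine finish (O.a 1) ?_ hdt
    rw [if_pos h0]
    exact beta_refl a1_mem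
  · have hb1 : 1 ≤ j % O.K := by omega
    have hb2 : j % O.K ≤ O.K - 1 := by
      have := Nat.mod_lt j (show 0 < O.K by omega); omega
    rcases hab with hab | hab
    · have hdt : d = O.a (j % O.K) := pi_inj hj hd (a_mem hb1 hb2) (hy1.symm.trans hab)
      refine finish _ ?_ hdt
      rw [if_neg h0]
      exact beta_refl (a_mem hb1 hb2)
    · have hdt : d = O.b (j % O.K) := pi_inj hj hd (b_mem hb1 hb2) (hy1.symm.trans hab)
      refine finish _ ?_ hdt
      rw [if_neg h0]
      exact beta_gen hb1 hb2

lemma tcls_of_bj {j : ℕ} (hj : j ≤ O.u * O.K) {x y : A} (hxy : (x, y) ∈ O.bj j)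
    {j2 : ℕ} (hj2 : j2 ≤ O.u * O.K) (hy : y ∈ O.tcls j2) : x ∈ O.tcls j := by
  by_cases hjj : j = j2
  · subst hjj
    obtain ⟨c, d, hc, hd, hb, hx1, hy1⟩ := bj_elim' hxy
    obtain ⟨c', hc', hy2, hrel⟩ := tcls_elim hj hy
    have hdc : d = c' := pi_inj hj hd hc' (hy1.symm.trans hy2)
    rw [hx1]
    exact tcls_intro (beta_trans (hdc ▸ hrel) (beta_symm hb))
  · exact (bj_touch hj hj2 hjj hxy (tcls_memB hj2 hy)).1

lemma bstar_trans {x y z : A} (h1 : (x, y) ∈ O.bstar) (h2 : (y, z) ∈ O.bstar) :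
    (x, z) ∈ O.bstar := by
  rcases h1 with ⟨j, hj, hxy⟩ | ⟨⟨j1, hj1, hx1⟩, ⟨j2, hj2, hy1⟩⟩
  · rcases h2 with ⟨j', hj', hyz⟩ | ⟨⟨j3, hj3, hy2⟩, ⟨j4, hj4, hz2⟩⟩
    · by_cases hjj : j = j'
      · subst hjj
        obtain ⟨c, d, hc, hd, hb, hx1, hy1⟩ := bj_elim' hxy
        obtain ⟨c', d', hc', hd', hb', hy2, hz2⟩ := bj_elim' hyz
        have hdc : d = c' := pi_inj hj hd hc' (hy1.symm.trans hy2)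
        refine bstar_bj hj ?_
        rw [show x = O.π j c from hx1, show z = O.π j d' from hz2]
        exact bj_intro (beta_trans hb (hdc ▸ hb'))
      · obtain ⟨c', d', hc', hd', hb', hy2, hz2⟩ := bj_elim' hyz
        have hyB' : y ∈ O.B j' := by rw [hy2]; exact pi_mem hj' hc'
        obtain ⟨c, d, hc, hd, hb, hx1, hy1⟩ := bj_elim' hxy
        have hyB : y ∈ O.B j := by rw [hy1]; exact pi_mem hj hd
        have hx' := (bj_touch hj hj' hjj hxy hyB').1
        have hz' := (bj_touch hj' hj (Ne.symm hjj) (bj_symm hyz) hyB).1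
        exact bstar_t hj hj' hx' hz'
    · exact bstar_t hj hj4 (tcls_of_bj hj hxy hj3 hy2) hz2
  · rcases h2 with ⟨j', hj', hyz⟩ | ⟨⟨j3, hj3, hy2⟩, ⟨j4, hj4, hz2⟩⟩
    · exact bstar_t hj1 hj' hx1 (tcls_of_bj hj' (bj_symm hyz) hj2 hy1)
    · exact bstar_t hj1 hj4 hx1 hz2

end Aux2

end OvII

end Overalg
namespace Overalg

namespace OvII

variable {A : Type*} {O : OvII A}

section Aux3

lemma btilde_elim {p : A × A} (h : p ∈ O.btilde) :
    (∃ j ≤ O.u * O.K, p ∈ O.bj j) ∨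
      ((∃ j ≤ O.u * O.K, p.1 ∈ O.tcls j) ∧ (∃ j ≤ O.u * O.K, p.2 ∈ O.tcls j)) ∨
      (∃ n, 1 ≤ n ∧ n ≤ O.N ∧ ∃ c ∈ O.B 0, (c, O.a 1) ∉ O.β ∧
        p.1 ∈ O.wing n c ∧ p.2 ∈ O.wing n c) := by
  rcases h with (h | h) | h
  · exact Or.inl h
  · exact Or.inr (Or.inl h)
  · exact Or.inr (Or.inr h)

lemma wing_elim {n : ℕ} {c x : A} (hx : x ∈ O.wing n c) :
    ∃ ℓ ∈ O.T n, ∃ d, (c, d) ∈ O.β ∧ x = O.π ℓ d := by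
  simp only [OvII.wing, Set.mem_iUnion] at hx
  obtain ⟨ℓ, hℓ, d, hd, hde⟩ := hx
  exact ⟨ℓ, hℓ, d, hd, hde.symm⟩

lemma wing_intro {n : ℕ} {c d : A} {ℓ : ℕ} (hℓ : ℓ ∈ O.T n) (hd : (c, d) ∈ O.β) :
    O.π ℓ d ∈ O.wing n c :=
  Set.mem_biUnion hℓ ⟨d, hd, rfl⟩

lemma T_facts {n ℓ : ℕ} (hn1 : 1 ≤ n) (hn2 : n ≤ O.N) (h : ℓ ∈ O.T n) :
    ℓ ≤ O.u * O.K ∧ ℓ % O.K = 0 := by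
  have hf := O.hT1 n hn1 hn2 h
  exact ⟨hf.1, Nat.mod_eq_zero_of_dvd hf.2⟩

lemma block_eq {n n' ℓ : ℕ} (hn1 : 1 ≤ n) (hn2 : n ≤ O.N) (hn'1 : 1 ≤ n') (hn'2 : n' ≤ O.N)
    (h : ℓ ∈ O.T n) (h' : ℓ ∈ O.T n') : n = n' := by
  have hf := O.hT1 n hn1 hn2 h
  obtain ⟨n0, -, hu⟩ := O.hT2 ℓ hf.1 hf.2
  rw [hu n ⟨hn1, hn2, h⟩, hu n' ⟨hn'1, hn'2, h'⟩]

-- ## Values of the retractions `e i`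

/-- For `i ∈ T n` a multiple of `K` and `x ∈ B j` with `j ∉ T n`,
`e i x` is the tie-point `a₁^i`. -/
lemma eK_out {n i : ℕ} (hn1 : 1 ≤ n) (hn2 : n ≤ O.N) (hiT : i ∈ O.T n) {j : ℕ}
    (hj : j ≤ O.u * O.K) (hjT : j ∉ O.T n) {c : A} (hc : c ∈ O.B 0) :
    O.e i (O.π j c) = O.π i (O.a 1) := by
  by_cases hmem : ∃ j'' ∈ O.T n, O.π j c ∈ O.B j''
  · obtain ⟨j'', hj''T, hmem2⟩ := hmem
    have hf := T_facts hn1 hn2 hj''T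
    have hne : j'' ≠ j := fun h => hjT (h ▸ hj''T)
    have hpe := inter_pt0 hf.1 hj hne hf.2 hmem2 (pi_mem hj hc)
    rw [hpe]
    exact O.heK1 n hn1 hn2 i hiT j'' hj''T (O.a 1) a1_mem
  · push_neg at hmem
    exact O.heK2 n hn1 hn2 i hiT _ hmem

/-- For `i` not a multiple of `K` and `x ∈ B j` with `j ≠ i`, `e i x` is one of the two
tie-points of `B i`. -/
lemma eM_val {i : ℕ} (hi : i ≤ O.u * O.K) (h0 : i % O.K ≠ 0) {j : ℕ} (hj : j ≤ O.u * O.K)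
    (hne : j ≠ i) {x : A} (hx : x ∈ O.B j) :
    O.e i x = O.π i (O.a (i % O.K)) ∨ O.e i x = O.π i (O.b (i % O.K)) := by
  by_cases hxi : x ∈ O.B i
  · have h := inter_pt hi hj (fun h => hne h.symm) hxi hx
    have heq := O.heM1 i hi h0 x hxi
    rcases h with ⟨h00, -⟩ | ⟨-, hab⟩
    · exact absurd h00 h0
    · rw [heq]; exact hab
  · rcases hne.lt_or_gt with hlt | hlt
    · exact Or.inl (O.heM2 i hi h0 j hlt x hx hxi)
    · exact Or.inr (O.heM3 i hi h0 j hlt hj x hx hxi)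

lemma e_ab {i : ℕ} (h0 : i % O.K ≠ 0) {x y : A}
    (hx : O.e i x = O.π i (O.a (i % O.K)) ∨ O.e i x = O.π i (O.b (i % O.K)))
    (hy : O.e i y = O.π i (O.a (i % O.K)) ∨ O.e i y = O.π i (O.b (i % O.K))) :
    ∃ c d, c ∈ O.B 0 ∧ d ∈ O.B 0 ∧ (c, d) ∈ O.β ∧ O.e i x = O.π i c ∧ O.e i y = O.π i d := by
  have hK2 := O.hK
  have hb1 : 1 ≤ i % O.K := by omega
  have hb2 : i % O.K ≤ O.K - 1 := by have := Nat.mod_lt i (show 0 < O.K by omega); omega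
  have haB : O.a (i % O.K) ∈ O.B 0 := a_mem hb1 hb2
  have hbB : O.b (i % O.K) ∈ O.B 0 := b_mem hb1 hb2
  have hgen := beta_gen hb1 hb2
  rcases hx with h | h <;> rcases hy with h' | h'
  · exact ⟨_, _, haB, haB, beta_refl haB, h, h'⟩
  · exact ⟨_, _, haB, hbB, hgen, h, h'⟩
  · exact ⟨_, _, hbB, haB, beta_symm hgen, h, h'⟩
  · exact ⟨_, _, hbB, hbB, beta_refl hbB, h, h'⟩

lemma e_tcls_M {i : ℕ} (hi : i ≤ O.u * O.K) (h0 : i % O.K ≠ 0) {x : A} {j : ℕ}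
    (hj : j ≤ O.u * O.K) (hx : x ∈ O.tcls j) :
    ∃ c, c ∈ O.B 0 ∧ (O.a (i % O.K), c) ∈ O.β ∧ O.e i x = O.π i c := by
  have hK2 := O.hK
  have hb1 : 1 ≤ i % O.K := by omega
  have hb2 : i % O.K ≤ O.K - 1 := by have := Nat.mod_lt i (show 0 < O.K by omega); omega
  obtain ⟨d, hd, rfl, hrel⟩ := tcls_elim hj hx
  by_cases hji : j = i
  · subst hji
    rw [if_neg h0] at hrel
    exact ⟨d, hd, hrel, by rw [O.heM1 j hj h0 _ (pi_mem hj hd)]⟩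
  · rcases eM_val hi h0 hj hji (pi_mem hj hd) with h | h
    · exact ⟨_, a_mem hb1 hb2, beta_refl (a_mem hb1 hb2), h⟩
    · exact ⟨_, b_mem hb1 hb2, beta_gen hb1 hb2, h⟩

lemma e_tcls_K {n i : ℕ} (hn1 : 1 ≤ n) (hn2 : n ≤ O.N) (hiT : i ∈ O.T n) {x : A} {j : ℕ}
    (hj : j ≤ O.u * O.K) (hx : x ∈ O.tcls j) :
    ∃ c, c ∈ O.B 0 ∧ (O.a 1, c) ∈ O.β ∧ O.e i x = O.π i c := by
  obtain ⟨d, hd, rfl, hrel⟩ := tcls_elim hj hx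
  by_cases hjT : j ∈ O.T n
  · have hjK : j % O.K = 0 := (T_facts hn1 hn2 hjT).2
    rw [if_pos hjK] at hrel
    exact ⟨d, hd, hrel, O.heK1 n hn1 hn2 i hiT j hjT d hd⟩
  · exact ⟨O.a 1, a1_mem, beta_refl a1_mem, eK_out hn1 hn2 hiT hj hjT hd⟩

/-- The main computation: every operation `e i` maps a `β̃`-pair to a pair of the form
`(π i c, π i d)` with `(c,d) ∈ β`. -/
lemma e_btilde {i : ℕ} (hi : i ≤ O.u * O.K) {p : A × A} (hp : p ∈ O.btilde) :
    ∃ c d, c ∈ O.B 0 ∧ d ∈ O.B 0 ∧ (c, d) ∈ O.β ∧ O.e i p.1 = O.π i c ∧ O.e i p.2 = O.π i d := by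
  have hK2 := O.hK
  by_cases h0 : i % O.K = 0
  · -- i is a multiple of K
    obtain ⟨ni, ⟨hni1, hni2, hniT⟩, -⟩ := O.hT2 i hi (Nat.dvd_of_mod_eq_zero h0)
    rcases btilde_elim hp with ⟨j, hj, hbj⟩ | ⟨⟨j1, hj1, hx1⟩, ⟨j2, hj2, hy1⟩⟩ |
      ⟨n', hn'1, hn'2, c, hcB, hca, hx, hy⟩
    · obtain ⟨c, d, hc, hd, hb, h1, h2⟩ := bj_elim hbj
      by_cases hjT : j ∈ O.T ni
      · exact ⟨c, d, hc, hd, hb,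
          by rw [h1]; exact O.heK1 ni hni1 hni2 i hniT j hjT c hc,
          by rw [h2]; exact O.heK1 ni hni1 hni2 i hniT j hjT d hd⟩
      · exact ⟨O.a 1, O.a 1, a1_mem, a1_mem, beta_refl a1_mem,
          by rw [h1]; exact eK_out hni1 hni2 hniT hj hjT hc,
          by rw [h2]; exact eK_out hni1 hni2 hniT hj hjT hd⟩
    · obtain ⟨c1, hc1, hr1, he1⟩ := e_tcls_K hni1 hni2 hniT hj1 hx1
      obtain ⟨c2, hc2, hr2, he2⟩ := e_tcls_K hni1 hni2 hniT hj2 hy1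
      exact ⟨c1, c2, hc1, hc2, beta_trans (beta_symm hr1) hr2, he1, he2⟩
    · obtain ⟨ℓ, hℓ, d, hd, hxe⟩ := wing_elim hx
      obtain ⟨ℓ', hℓ', d', hd', hye⟩ := wing_elim hy
      by_cases hnn : n' = ni
      · subst hnn
        exact ⟨d, d', beta_snd hd, beta_snd hd', beta_trans (beta_symm hd) hd',
          by rw [hxe]; exact O.heK1 n' hn'1 hn'2 i hniT ℓ hℓ d (beta_snd hd),
          by rw [hye]; exact O.heK1 n' hn'1 hn'2 i hniT ℓ' hℓ' d' (beta_snd hd')⟩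
      · have hℓT : ℓ ∉ O.T ni := fun h =>
          hnn (block_eq hn'1 hn'2 hni1 hni2 hℓ h)
        have hℓ'T : ℓ' ∉ O.T ni := fun h =>
          hnn (block_eq hn'1 hn'2 hni1 hni2 hℓ' h)
        exact ⟨O.a 1, O.a 1, a1_mem, a1_mem, beta_refl a1_mem,
          by rw [hxe]; exact eK_out hni1 hni2 hniT (T_facts hn'1 hn'2 hℓ).1 hℓT (beta_snd hd),
          by rw [hye]; exact eK_out hni1 hni2 hniT (T_facts hn'1 hn'2 hℓ').1 hℓ'T (beta_snd hd')⟩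
  · -- i is not a multiple of K
    rcases btilde_elim hp with ⟨j, hj, hbj⟩ | ⟨⟨j1, hj1, hx1⟩, ⟨j2, hj2, hy1⟩⟩ |
      ⟨n', hn'1, hn'2, c, hcB, hca, hx, hy⟩
    · obtain ⟨c, d, hc, hd, hb, h1, h2⟩ := bj_elim hbj
      by_cases hji : j = i
      · subst hji
        exact ⟨c, d, hc, hd, hb,
          by rw [h1]; exact O.heM1 j hj h0 _ (pi_mem hj hc),
          by rw [h2]; exact O.heM1 j hj h0 _ (pi_mem hj hd)⟩
      · refine e_ab h0 ?_ ?_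
        · rw [h1]; exact eM_val hi h0 hj hji (pi_mem hj hc)
        · rw [h2]; exact eM_val hi h0 hj hji (pi_mem hj hd)
    · obtain ⟨c1, hc1, hr1, he1⟩ := e_tcls_M hi h0 hj1 hx1
      obtain ⟨c2, hc2, hr2, he2⟩ := e_tcls_M hi h0 hj2 hy1
      exact ⟨c1, c2, hc1, hc2, beta_trans (beta_symm hr1) hr2, he1, he2⟩
    · obtain ⟨ℓ, hℓ, d, hd, hxe⟩ := wing_elim hx
      obtain ⟨ℓ', hℓ', d', hd', hye⟩ := wing_elim hy
      have hf := T_facts hn'1 hn'2 hℓ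
      have hf' := T_facts hn'1 hn'2 hℓ'
      have hℓi : ℓ ≠ i := fun h => h0 (h ▸ hf.2)
      have hℓ'i : ℓ' ≠ i := fun h => h0 (h ▸ hf'.2)
      refine e_ab h0 ?_ ?_
      · rw [hxe]; exact eM_val hi h0 hf.1 hℓi (pi_mem hf.1 (beta_snd hd))
      · rw [hye]; exact eM_val hi h0 hf'.1 hℓ'i (pi_mem hf'.1 (beta_snd hd'))

/-- Any equivalence relation between `β⋆` and `β̃` is a congruence of the overalgebra. -/
lemma con_of_equiv {θ : Set (A × A)} (heq : IsEquivRel θ) (h1 : O.bstar ⊆ θ)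
    (h2 : θ ⊆ O.btilde) : IsCon O.FA θ := by
  refine ⟨heq, ?_⟩
  rintro g hg p hp
  have hpb : p ∈ O.btilde := h2 hp
  rcases hg with (⟨f, hf, rfl⟩ | ⟨i, hi, rfl⟩) | ⟨j, hj1, hj2, rfl⟩
  · obtain ⟨c, d, hc, hd, hb, he1, he2⟩ := e_btilde (Nat.zero_le _) hpb
    rw [O.hπ0] at he1 he2
    have hth : (f c, f d) ∈ θ := h1 (beta_bstar (beta_cong hf (p := (c, d)) hb))
    show ((f ∘ O.e 0) p.1, (f ∘ O.e 0) p.2) ∈ θ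
    simpa only [Function.comp_apply, he1, he2] using hth
  · obtain ⟨c, d, hc, hd, hb, he1, he2⟩ := e_btilde hi hpb
    show (O.qi0 i p.1, O.qi0 i p.2) ∈ θ
    unfold OvII.qi0
    rw [he1, he2, O.hσ i hi c hc, O.hσ i hi d hd]
    exact h1 (beta_bstar hb)
  · obtain ⟨c, d, hc, hd, hb, he1, he2⟩ := e_btilde (Nat.zero_le _) hpb
    show (O.q0j j p.1, O.q0j j p.2) ∈ θ
    unfold OvII.q0j
    rw [he1, he2, O.hπ0, O.hπ0]
    exact h1 (bstar_bj hj2 (bj_intro hb))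

-- ## Wing elements are rigid

lemma wing_not_tcls {ℓ : ℕ} {c d : A} (hℓ : ℓ ≤ O.u * O.K) (hℓK : ℓ % O.K = 0)
    (hca : (c, O.a 1) ∉ O.β) (hcd : (c, d) ∈ O.β) {j : ℕ} (hj : j ≤ O.u * O.K)
    (h : O.π ℓ d ∈ O.tcls j) : False := by
  have hdB : d ∈ O.B 0 := beta_snd hcd
  obtain ⟨c', hc', heq, hrel⟩ := tcls_elim hj h
  by_cases hjl : j = ℓ
  · subst hjl
    have hdc : d = c' := pi_inj hj hdB hc' heq
    rw [if_pos hℓK] at hrel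
    exact hca (beta_trans hcd (beta_symm (hdc ▸ hrel)))
  · have hmem1 : O.π ℓ d ∈ O.B ℓ := pi_mem hℓ hdB
    have hmem2 : O.π ℓ d ∈ O.B j := by rw [heq]; exact pi_mem hj hc'
    have hpe := inter_pt0 hℓ hj (fun h => hjl h.symm) hℓK hmem1 hmem2
    have hd1 : d = O.a 1 := pi_inj hℓ hdB a1_mem hpe
    exact hca (hd1 ▸ hcd)

lemma bstar_wing {x y : A} (h : (x, y) ∈ O.bstar) {ℓ : ℕ} {c d : A} (hℓ : ℓ ≤ O.u * O.K)
    (hℓK : ℓ % O.K = 0) (hca : (c, O.a 1) ∉ O.β) (hcd : (c, d) ∈ O.β) (hx : x = O.π ℓ d) :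
    ∃ d', (c, d') ∈ O.β ∧ y = O.π ℓ d' := by
  rcases h with ⟨j, hj, hbj⟩ | ⟨⟨j1, hj1, hx1⟩, -⟩
  · obtain ⟨c1, c2, hc1, hc2, hb, h1, h2⟩ := bj_elim' hbj
    by_cases hjl : j = ℓ
    · subst hjl
      have hcd1 : c1 = d := pi_inj hj hc1 (beta_snd hcd) (h1.symm.trans hx)
      exact ⟨c2, beta_trans hcd (hcd1 ▸ hb), h2⟩
    · have hxj : x ∈ O.B j := by rw [h1]; exact pi_mem hj hc1
      have hxl : x ∈ O.B ℓ := by rw [hx]; exact pi_mem hℓ (beta_snd hcd)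
      have hpe := inter_pt0 hℓ hj (fun h => hjl h.symm) hℓK hxl hxj
      have hd1 : d = O.a 1 := pi_inj hℓ (beta_snd hcd) a1_mem (hx.symm.trans hpe)
      exact absurd (hd1 ▸ hcd) hca
  · exact absurd (hx ▸ hx1) (fun h => wing_not_tcls hℓ hℓK hca hcd hj1 h)

end Aux3

end OvII

end Overalg
open Overalg OvII in
/-- In an overalgebra `𝐀` of the second type, where `β` has classes `C 0, …, C (m-1)`,
the interval `[β⋆, β̃]` in `Con 𝐀` equals `{θ ∈ Eq(A) : β⋆ ⊆ θ ⊆ β̃}` and is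
isomorphic as a lattice to `∏_{n=1}^{N} (Eq(𝒯_n))^{m−1}`. -/
theorem intervalII_bstar_btilde {A : Type*} (O : OvII A)
    (m : ℕ) (C : Fin m → Set A)
    (hCcls : ∀ r : Fin m, ∃ c ∈ O.B 0, C r = O.cls O.β c)
    (hCpart : ∀ x ∈ O.B 0, ∃! r : Fin m, x ∈ C r) :
    {θ : Set (A × A) | IsCon O.FA θ ∧ O.bstar ⊆ θ ∧ θ ⊆ O.btilde} =
      {θ : Set (A × A) | IsEquivRel θ ∧ O.bstar ⊆ θ ∧ θ ⊆ O.btilde} ∧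
    Nonempty
      ({θ : Set (A × A) // IsCon O.FA θ ∧ O.bstar ⊆ θ ∧ θ ⊆ O.btilde} ≃o
        ((n : Fin O.N) → Fin (m - 1) → Setoid ↥(O.T (n.1 + 1)))) := by
  classical
  refine ⟨Set.ext fun θ => ⟨fun ⟨h, h1, h2⟩ => ⟨h.1, h1, h2⟩,
    fun ⟨h, h1, h2⟩ => ⟨con_of_equiv h h1 h2, h1, h2⟩⟩, ?_⟩
  -- ### set-up: representatives of the non-`a 1` classes of β
  obtain ⟨rstar, hrstar, hrstaru⟩ := hCpart (O.a 1) a1_mem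
  have hm : m - 1 + 1 = m := Nat.succ_pred_eq_of_pos rstar.pos
  choose crep hcrepB hcrepC using hCcls
  let fe : Fin (m - 1 + 1) ≃ Fin m := finCongr hm
  let ps : Fin (m - 1 + 1) := fe.symm rstar
  let emb : Fin (m - 1) → Fin m := fun r => fe (ps.succAbove r)
  have emb_ne : ∀ r, emb r ≠ rstar := by
    intro r h
    have h2 : ps.succAbove r = ps := by
      have := congrArg fe.symm h
      simpa [emb, ps] using this
    exact Fin.succAbove_ne ps r h2
  have emb_inj : Function.Injective emb := fun r r' h =>
    Fin.succAbove_right_injective (p := ps) (fe.injective h)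
  have emb_surj : ∀ r0 : Fin m, r0 ≠ rstar → ∃ r, emb r = r0 := by
    intro r0 h
    obtain ⟨r, hr⟩ := Fin.exists_succAbove_eq (x := fe.symm r0) (y := ps)
      (fun hh => h (by simpa [ps] using congrArg fe hh))
    exact ⟨r, by simp [emb, hr]⟩
  have hCmem : ∀ r : Fin m, ∀ x, x ∈ C r ↔ (crep r, x) ∈ O.β := by
    intro r x; rw [hcrepC r]; exact Iff.rfl
  have hCr_a1 : ∀ r : Fin m, (crep r, O.a 1) ∈ O.β → r = rstar := fun r h =>
    hrstaru r ((hCmem r _).2 h)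
  have hrel_rstar : (crep rstar, O.a 1) ∈ O.β := (hCmem rstar _).1 hrstar
  have hcr : ∀ r : Fin (m - 1), (crep (emb r), O.a 1) ∉ O.β := fun r h =>
    emb_ne r (hCr_a1 _ h)
  have hfind : ∀ c ∈ O.B 0, (c, O.a 1) ∉ O.β → ∃ r : Fin (m - 1), (crep (emb r), c) ∈ O.β := by
    intro c hc hca
    obtain ⟨r0, hr0, -⟩ := hCpart c hc
    have hr0c : (crep r0, c) ∈ O.β := (hCmem r0 c).1 hr0
    have hne : r0 ≠ rstar := by
      rintro rfl
      exact hca (beta_trans (beta_symm hr0c) hrel_rstar)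
    obtain ⟨r, hr⟩ := emb_surj r0 hne
    exact ⟨r, by rw [hr]; exact hr0c⟩
  have hrinj : ∀ r r' : Fin (m - 1), (crep (emb r), crep (emb r')) ∈ O.β → r = r' := by
    intro r r' h
    have h1 : crep (emb r') ∈ C (emb r) := (hCmem _ _).2 h
    have h2 : crep (emb r') ∈ C (emb r') := (hCmem _ _).2 (beta_refl (hcrepB _))
    obtain ⟨r0, -, hu⟩ := hCpart (crep (emb r')) (hcrepB _)
    exact emb_inj ((hu _ h1).trans (hu _ h2).symm)
  have hTm : ∀ (n : Fin O.N) {ℓ : ℕ}, ℓ ∈ O.T (n.1 + 1) → ℓ ≤ O.u * O.K ∧ ℓ % O.K = 0 := by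
    intro n ℓ hℓ
    exact T_facts (by omega) n.2 hℓ
  -- ### the two maps of the isomorphism
  let Φ : {θ : Set (A × A) // IsCon O.FA θ ∧ O.bstar ⊆ θ ∧ θ ⊆ O.btilde} →
      ((n : Fin O.N) → Fin (m - 1) → Setoid ↥(O.T (n.1 + 1))) := fun θ n r =>
    { r := fun ℓ ℓ' => (O.π ℓ.1 (crep (emb r)), O.π ℓ'.1 (crep (emb r))) ∈ θ.1
      iseqv := ⟨fun ℓ => θ.2.2.1 (bstar_bj (hTm n ℓ.2).1 (bj_intro (beta_refl (hcrepB _)))),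
        fun h => θ.2.1.1.2.1 _ _ h,
        fun h h' => θ.2.1.1.2.2 _ _ _ h h'⟩ }
  let W : ((n : Fin O.N) → Fin (m - 1) → Setoid ↥(O.T (n.1 + 1))) → Set (A × A) := fun P =>
    O.bstar ∪ {p | ∃ (n : Fin O.N) (r : Fin (m - 1)) (ℓ ℓ' : ℕ) (hℓ : ℓ ∈ O.T (n.1 + 1))
      (hℓ' : ℓ' ∈ O.T (n.1 + 1)) (d d' : A),
      (P n r) ⟨ℓ, hℓ⟩ ⟨ℓ', hℓ'⟩ ∧ (crep (emb r), d) ∈ O.β ∧ (crep (emb r), d') ∈ O.β ∧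
      p.1 = O.π ℓ d ∧ p.2 = O.π ℓ' d'}
  -- ### properties of W
  have Wsymm : ∀ P, ∀ p ∈ W P, (p.2, p.1) ∈ W P := by
    intro P p hp
    rcases hp with hp | ⟨n, r, ℓ, ℓ', hℓ, hℓ', d, d', hP, hd, hd', h1, h2⟩
    · exact Or.inl (bstar_symm hp)
    · exact Or.inr ⟨n, r, ℓ', ℓ, hℓ', hℓ, d', d, (P n r).iseqv.symm hP, hd', hd, h2, h1⟩
  have Wtrans : ∀ P, ∀ x y z : A, (x, y) ∈ W P → (y, z) ∈ W P → (x, z) ∈ W P := by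
    intro P x y z h1 h2
    rcases h1 with h1 | ⟨n, r, ℓ, ℓ', hℓ, hℓ', d, d', hP, hd, hd', hx, hy⟩
    · rcases h2 with h2 | ⟨n, r, ℓ, ℓ', hℓ, hℓ', d, d', hP, hd, hd', hy, hz⟩
      · exact Or.inl (bstar_trans h1 h2)
      · have hf := hTm n hℓ
        obtain ⟨d0, hd0, hx0⟩ := bstar_wing (bstar_symm h1) hf.1 hf.2 (hcr r) hd hy
        exact Or.inr ⟨n, r, ℓ, ℓ', hℓ, hℓ', d0, d', hP, hd0, hd', hx0, hz⟩
    · rcases h2 with h2 | ⟨n2, r2, ℓ2, ℓ2', hℓ2, hℓ2', e2, e2', hP2, he2, he2', hy2, hz⟩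
      · have hf := hTm n hℓ'
        obtain ⟨d0, hd0, hz0⟩ := bstar_wing h2 hf.1 hf.2 (hcr r) hd' hy
        exact Or.inr ⟨n, r, ℓ, ℓ', hℓ, hℓ', d, d0, hP, hd, hd0, hx, hz0⟩
      · have hf1 := hTm n hℓ'
        have hf2 := hTm n2 hℓ2
        have hyB1 : y ∈ O.B ℓ' := by
          rw [show y = O.π ℓ' d' from hy]; exact pi_mem hf1.1 (beta_snd hd')
        have hyB2 : y ∈ O.B ℓ2 := by
          rw [show y = O.π ℓ2 e2 from hy2]; exact pi_mem hf2.1 (beta_snd he2)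
        have hle : ℓ' = ℓ2 := mult_eq hf1.1 hf2.1 hf1.2 hf2.2 hyB1 hyB2
        subst hle
        have hde : d' = e2 := pi_inj hf1.1 (beta_snd hd') (beta_snd he2)
          ((show y = O.π ℓ' d' from hy).symm.trans hy2)
        have hrr : r = r2 := hrinj r r2 (beta_trans hd' (beta_symm (by rw [hde]; exact he2)))
        have hnn : n = n2 := by
          have := block_eq (ℓ := ℓ') (by omega) n.2 (by omega) n2.2 hℓ' hℓ2
          exact Fin.ext (by omega)
        subst hrr
        subst hnn
        exact Or.inr ⟨n, r, ℓ, ℓ2', hℓ, hℓ2', d, e2', (P n r).iseqv.trans hP hP2, hd, he2', hx, hz⟩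
  have Wsub : ∀ P, W P ⊆ O.btilde := by
    intro P p hp
    rcases hp with hp | ⟨n, r, ℓ, ℓ', hℓ, hℓ', d, d', hP, hd, hd', h1, h2⟩
    · exact Or.inl hp
    · refine Or.inr ⟨n.1 + 1, by omega, n.2, crep (emb r), hcrepB _, hcr r, ?_, ?_⟩
      · rw [h1]; exact wing_intro hℓ hd
      · rw [h2]; exact wing_intro hℓ' hd'
  have WIprop : ∀ P, IsCon O.FA (W P) ∧ O.bstar ⊆ W P ∧ W P ⊆ O.btilde := by
    intro P
    have heqv : IsEquivRel (W P) :=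
      ⟨fun x => Or.inl (bstar_refl x), fun x y h => Wsymm P (x, y) h, Wtrans P⟩
    exact ⟨con_of_equiv heqv (fun p hp => Or.inl hp) (Wsub P), fun p hp => Or.inl hp, Wsub P⟩
  -- ### the two maps invert each other
  have left_inv : ∀ θ : {θ : Set (A × A) // IsCon O.FA θ ∧ O.bstar ⊆ θ ∧ θ ⊆ O.btilde},
      W (Φ θ) = θ.1 := by
    intro θ
    have htr := θ.2.1.1.2.2
    apply Set.Subset.antisymm
    · intro p hp
      rcases hp with hp | ⟨n, r, ℓ, ℓ', hℓ, hℓ', d, d', hP, hd, hd', h1, h2⟩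
      · exact θ.2.2.1 hp
      · have hPv : (O.π ℓ (crep (emb r)), O.π ℓ' (crep (emb r))) ∈ θ.1 := hP
        have e1 : (p.1, O.π ℓ (crep (emb r))) ∈ θ.1 := by
          refine θ.2.2.1 (bstar_bj (hTm n hℓ).1 ?_)
          rw [h1]
          exact bj_intro (beta_symm hd)
        have e2 : (O.π ℓ' (crep (emb r)), p.2) ∈ θ.1 := by
          refine θ.2.2.1 (bstar_bj (hTm n hℓ').1 ?_)
          rw [h2]
          exact bj_intro hd'
        exact htr _ _ _ (htr _ _ _ e1 hPv) e2
    · intro p hp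
      rcases btilde_elim (θ.2.2.2 hp) with ⟨j, hj, hbj⟩ | ⟨ht1, ht2⟩ |
        ⟨n', hn'1, hn'2, c, hcB, hca, hx, hy⟩
      · exact Or.inl (bstar_bj hj hbj)
      · exact Or.inl (Or.inr ⟨ht1, ht2⟩)
      · obtain ⟨ℓ, hℓ, d, hd, hxe⟩ := wing_elim hx
        obtain ⟨ℓ', hℓ', d', hd', hye⟩ := wing_elim hy
        obtain ⟨r, hr⟩ := hfind c hcB hca
        have hN0 : n' - 1 < O.N := by omega
        have hn'e : (⟨n' - 1, hN0⟩ : Fin O.N).1 + 1 = n' := by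
          show n' - 1 + 1 = n'
          omega
        have hℓT : ℓ ∈ O.T ((⟨n' - 1, hN0⟩ : Fin O.N).1 + 1) := by rw [hn'e]; exact hℓ
        have hℓ'T : ℓ' ∈ O.T ((⟨n' - 1, hN0⟩ : Fin O.N).1 + 1) := by rw [hn'e]; exact hℓ'
        have hcd : (crep (emb r), d) ∈ O.β := beta_trans hr hd
        have hcd' : (crep (emb r), d') ∈ O.β := beta_trans hr hd'
        have e1 : (O.π ℓ (crep (emb r)), p.1) ∈ θ.1 := by
          refine θ.2.2.1 (bstar_bj (hTm _ hℓT).1 ?_)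
          rw [hxe]
          exact bj_intro hcd
        have e2 : (p.2, O.π ℓ' (crep (emb r))) ∈ θ.1 := by
          refine θ.2.2.1 (bstar_bj (hTm _ hℓ'T).1 ?_)
          rw [hye]
          exact bj_intro (beta_symm hcd')
        have hPv : (O.π ℓ (crep (emb r)), O.π ℓ' (crep (emb r))) ∈ θ.1 :=
          htr _ _ _ (htr _ _ _ e1 hp) e2
        exact Or.inr ⟨⟨n' - 1, hN0⟩, r, ℓ, ℓ', hℓT, hℓ'T, d, d', hPv, hcd, hcd', hxe, hye⟩
  have right_inv : ∀ P : (n : Fin O.N) → Fin (m - 1) → Setoid ↥(O.T (n.1 + 1)),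
      Φ ⟨W P, WIprop P⟩ = P := by
    intro P
    funext n r
    apply Setoid.ext
    intro ℓ ℓ'
    constructor
    · intro h
      have h' : (O.π ℓ.1 (crep (emb r)), O.π ℓ'.1 (crep (emb r))) ∈ W P := h
      rcases h' with h' | ⟨n2, r2, ℓ2, ℓ2', hℓ2, hℓ2', d, d', hP, hd, hd', h1, h2⟩
      · have hf := hTm n ℓ.2
        have hf' := hTm n ℓ'.2
        obtain ⟨d0, hd0, he⟩ := bstar_wing h' hf.1 hf.2 (hcr r) (beta_refl (hcrepB _)) rfl
        have hBB : O.π ℓ'.1 (crep (emb r)) ∈ O.B ℓ'.1 := pi_mem hf'.1 (hcrepB _)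
        have hBB2 : O.π ℓ'.1 (crep (emb r)) ∈ O.B ℓ.1 := by
          rw [he]; exact pi_mem hf.1 (beta_snd hd0)
        have hee : ℓ = ℓ' := Subtype.ext (mult_eq hf'.1 hf.1 hf'.2 hf.2 hBB hBB2).symm
        exact hee ▸ (P n r).iseqv.refl ℓ'
      · have hf1 := hTm n ℓ.2
        have hf1' := hTm n ℓ'.2
        have hf2 := hTm n2 hℓ2
        have hf2' := hTm n2 hℓ2'
        have h1' : O.π ℓ.1 (crep (emb r)) = O.π ℓ2 d := h1
        have h2' : O.π ℓ'.1 (crep (emb r)) = O.π ℓ2' d' := h2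
        have hB2 : O.π ℓ.1 (crep (emb r)) ∈ O.B ℓ2 := by
          rw [h1']; exact pi_mem hf2.1 (beta_snd hd)
        have hle : ℓ.1 = ℓ2 := mult_eq hf1.1 hf2.1 hf1.2 hf2.2 (pi_mem hf1.1 (hcrepB _)) hB2
        subst hle
        have hB2' : O.π ℓ'.1 (crep (emb r)) ∈ O.B ℓ2' := by
          rw [h2']; exact pi_mem hf2'.1 (beta_snd hd')
        have hle' : ℓ'.1 = ℓ2' :=
          mult_eq hf1'.1 hf2'.1 hf1'.2 hf2'.2 (pi_mem hf1'.1 (hcrepB _)) hB2'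
        subst hle'
        have hdc : crep (emb r) = d := pi_inj hf1.1 (hcrepB _) (beta_snd hd) h1'
        have hcc : (crep (emb r2), crep (emb r)) ∈ O.β := by rw [hdc]; exact hd
        have hrr : r2 = r := hrinj r2 r hcc
        have hnn : n2 = n := by
          have := block_eq (ℓ := ℓ.1) (by omega) n2.2 (by omega) n.2 hℓ2 ℓ.2
          exact Fin.ext (by omega)
        subst hrr
        subst hnn
        exact hP
    · intro h
      exact Or.inr ⟨n, r, ℓ.1, ℓ'.1, ℓ.2, ℓ'.2, crep (emb r), crep (emb r), h,
        beta_refl (hcrepB _), beta_refl (hcrepB _), rfl, rfl⟩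
  have mono2 : ∀ P P' : (n : Fin O.N) → Fin (m - 1) → Setoid ↥(O.T (n.1 + 1)),
      P ≤ P' → W P ⊆ W P' := by
    intro P P' hle p hp
    rcases hp with hp | ⟨n, r, ℓ, ℓ', hℓ, hℓ', d, d', hP, hd, hd', h1, h2⟩
    · exact Or.inl hp
    · exact Or.inr ⟨n, r, ℓ, ℓ', hℓ, hℓ', d, d', Setoid.le_def.1 (hle n r) hP, hd, hd', h1, h2⟩
  refine ⟨{ toFun := Φ, invFun := fun P => ⟨W P, WIprop P⟩,
            left_inv := fun θ => Subtype.ext (left_inv θ),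
            right_inv := right_inv,
            map_rel_iff' := ?_ }⟩
  intro θ θ'
  constructor
  · intro h
    have hsub := mono2 _ _ h
    rw [left_inv θ, left_inv θ'] at hsub
    exact hsub
  · intro h
    exact fun n r => Setoid.le_def.2 fun {x y} hx => h hx
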